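/- Let $B$ be a commutative $\mathbf{k}$-bialgebra, and let $L$ be the set of id-unipotent elements of $B$. Let $g_1,\ldots,g_n$ be grouplike elements of $B$ such that every difference $g_i - g_j$ (for $i \neq j$) is a regular element of $B$ and every $g_i$ is a regular element of $B$. If $b_1,\ldots,b_n \in L$ satisfy $\sum_{i=1}^n b_i g_i = 0$, then $b_i = 0$ for all $i$. -/

import Mathlib

open TensorProduct

variable (k : Type*) [CommRing k] (B : Type*) [CommRing B] [Bialgebra k B]

/-- The convolution product `f ⊛ g = μ ∘ (f ⊗ g) ∘ Δ` on `k`-linear maps `B → B`. -/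
noncomputable def conv (f g : B →ₗ[k] B) : B →ₗ[k] B :=
  LinearMap.mul' k B ∘ₗ TensorProduct.map f g ∘ₗ Coalgebra.comul

/-- The unit `η ∘ ε` of the convolution algebra. -/
noncomputable def convOne : B →ₗ[k] B :=
  (Algebra.linearMap k B) ∘ₗ Coalgebra.counit

/-- Convolution powers: `f^{⊛ 0} = η ∘ ε` and `f^{⊛ (n+1)} = f^{⊛ n} ⊛ f`. -/
noncomputable def convPow : ℕ → (B →ₗ[k] B) → (B →ₗ[k] B)
  | 0, _ => convOne k B
  | n + 1, f => conv k B (convPow n f) f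

/-- An element `b` is id-unipotent if there is `m : ℤ` such that
`(ηε - id)^{⊛ n} (b) = 0` for every nonnegative integer `n > m`. -/
def IdUnipotent (b : B) : Prop :=
  ∃ m : ℤ, ∀ n : ℕ, m < (n : ℤ) → convPow k B n (convOne k B - LinearMap.id) b = 0

/-- An element `g` of a `k`-bialgebra is grouplike if `Δ g = g ⊗ g` and `ε g = 1`. -/
def IsGrouplike (g : B) : Prop :=
  Coalgebra.comul (R := k) g = g ⊗ₜ[k] g ∧ Coalgebra.counit (R := k) g = 1

/-! ### Auxiliary material: finite differences of sequences -/

namespace Stmt9Aux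

section Seq

variable {R : Type*} [CommRing R]

/-- Iterated finite difference operator on sequences. -/
def dpow : ℕ → (ℕ → R) → (ℕ → R)
  | 0, u => u
  | n + 1, u => fun a => dpow n u a - dpow n u (a + 1)

lemma dpow_succ_apply (n : ℕ) (u : ℕ → R) (a : ℕ) :
    dpow (n + 1) u a = dpow n u a - dpow n u (a + 1) := rfl

lemma dpow_shift (n : ℕ) (u : ℕ → R) (a : ℕ) :
    dpow n (fun t => u (t + 1)) a = dpow n u (a + 1) := by
  induction n generalizing a with
  | zero => rfl
  | succ n ih => simp only [dpow_succ_apply, ih]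

lemma dpow_zero_fun (n : ℕ) (a : ℕ) : dpow n (fun _ => (0 : R)) a = 0 := by
  induction n generalizing a with
  | zero => rfl
  | succ n ih => simp only [dpow_succ_apply, ih, sub_zero]

/-- If all iterated differences of `u` at `0` of order `≥ M` vanish, then the
`M`-th difference vanishes identically (Newton). -/
lemma dpow_of_vanishing {M : ℕ} :
    ∀ (a : ℕ) (u : ℕ → R), (∀ n, M ≤ n → dpow n u 0 = 0) → dpow M u a = 0 := by
  intro a
  induction a with
  | zero => exact fun u h => h M le_rfl
  | succ a ih =>
    intro u h
    rw [show a + 1 = a + 1 from rfl, ← dpow_shift]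
    refine ih _ (fun n hn => ?_)
    rw [dpow_shift]
    have h1 : dpow n u (0 + 1) = dpow n u 0 - dpow (n + 1) u 0 := by
      rw [dpow_succ_apply]; ring
    rw [h1, h n hn, h (n + 1) (le_trans hn (Nat.le_succ n)), sub_zero]

/-- The basic one-step transform `u ↦ (a ↦ g·u(a+1) - c·u(a))`. -/
def step (g c : R) (u : ℕ → R) : ℕ → R := fun a => g * u (a + 1) - c * u a

lemma dpow_step (g c : R) (u : ℕ → R) (n a : ℕ) :
    dpow n (step g c u) a = g * dpow n u (a + 1) - c * dpow n u a := by
  induction n generalizing a with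
  | zero => rfl
  | succ n ih => simp only [dpow_succ_apply, ih]; ring

lemma iterate_step_self (g : R) (u : ℕ → R) (m a : ℕ) :
    (step g g)^[m] u a = (-g) ^ m * dpow m u a := by
  induction m generalizing a with
  | zero => simp [dpow]
  | succ m ih =>
    rw [Function.iterate_succ_apply']
    show g * (step g g)^[m] u (a + 1) - g * (step g g)^[m] u a = _
    rw [ih (a + 1), ih a, dpow_succ_apply]; ring

lemma dpow_iterate_step {M : ℕ} (g c : R) (u : ℕ → R) (hd : ∀ a, dpow M u a = 0)
    (j : ℕ) : ∀ a, dpow M ((step g c)^[j] u) a = 0 := by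
  induction j with
  | zero => exact hd
  | succ j ih =>
    intro a
    rw [Function.iterate_succ_apply', dpow_step, ih (a + 1), ih a, mul_zero, mul_zero, sub_zero]

lemma step_inj (g c : R) (hreg : g - c ∈ nonZeroDivisors R) (u : ℕ → R) (K : ℕ)
    (hd : ∀ a, dpow K u a = 0) (h0 : ∀ a, step g c u a = 0) : ∀ a, u a = 0 := by
  have hstepfun : step g c u = fun _ => (0 : R) := funext h0
  have key : ∀ j a, dpow (K - j) u a = 0 := by
    intro j
    induction j with
    | zero => simpa using hd
    | succ j ih =>
      intro a
      rcases le_or_gt K j with hK | hK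
      · have : K - (j + 1) = K - j := by omega
        rw [this]; exact ih a
      · have he : K - j = (K - (j + 1)) + 1 := by omega
        set e := K - (j + 1) with hedef
        have hstep : g * dpow e u (a + 1) - c * dpow e u a = 0 := by
          rw [← dpow_step, hstepfun, dpow_zero_fun]
        have heq : dpow e u (a + 1) = dpow e u a := by
          have h2 := ih a
          rw [he, dpow_succ_apply] at h2
          have := sub_eq_zero.mp h2
          exact this.symm
        have h3 : dpow e u a * (g - c) = 0 := by
          rw [heq] at hstep; linear_combination hstep
        exact hreg.2 _ h3
  have := key K 
  simpa [dpow] using this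

/-- The core combinatorial lemma: "exponential polynomials" with regular,
pairwise-regularly-separated bases that vanish identically have zero coefficients. -/
lemma core (M : ℕ) : ∀ (n : ℕ) (g : Fin n → R),
    (∀ i j, i ≠ j → g i - g j ∈ nonZeroDivisors R) → (∀ i, g i ∈ nonZeroDivisors R) →
    ∀ (u : Fin n → ℕ → R), (∀ i a, dpow M (u i) a = 0) →
    (∀ a, ∑ i, g i ^ a * u i a = 0) → ∀ i a, u i a = 0 := by
  intro n
  induction n with
  | zero => intro g _ _ u _ _ i; exact i.elim0
  | succ n ih =>
    intro g hr1 hr2 u hd hsum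
    set c := g 0 with hc
    -- apply the step transform repeatedly; the sum identity is preserved
    have hU : ∀ j a, ∑ i, g i ^ a * ((step (g i) c)^[j] (u i)) a = 0 := by
      intro j
      induction j with
      | zero => simpa using hsum
      | succ j ihj =>
        intro a
        have h1 := ihj (a + 1)
        have h2 := ihj a
        calc ∑ i, g i ^ a * ((step (g i) c)^[j + 1] (u i)) a
            = ∑ i, (g i ^ (a + 1) * ((step (g i) c)^[j] (u i)) (a + 1)
                - c * (g i ^ a * ((step (g i) c)^[j] (u i)) a)) := by
              refine Finset.sum_congr rfl (fun i _ => ?_)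
              rw [Function.iterate_succ_apply']
              show g i ^ a * (g i * (step (g i) c)^[j] (u i) (a + 1)
                - c * (step (g i) c)^[j] (u i) a) = _
              ring
          _ = 0 := by
              rw [Finset.sum_sub_distrib, h1, ← Finset.mul_sum, h2, mul_zero, sub_zero]
    -- index 0 dies after M steps
    have hU0 : ∀ a, ((step (g 0) c)^[M] (u 0)) a = 0 := by
      intro a
      rw [hc, iterate_step_self, hd 0 a, mul_zero]
    have hsum' : ∀ a, ∑ i : Fin n, (g i.succ) ^ a * ((step (g i.succ) c)^[M] (u i.succ)) a = 0 := by
      intro a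
      have h := hU M a
      rw [Fin.sum_univ_succ, hU0 a, mul_zero, zero_add] at h
      exact h
    have hd' : ∀ (i : Fin n) a, dpow M ((step (g i.succ) c)^[M] (u i.succ)) a = 0 :=
      fun i => dpow_iterate_step (g i.succ) c (u i.succ) (hd i.succ) M
    have key := ih (fun i => g i.succ)
      (fun i j hij => hr1 i.succ j.succ (fun h => hij (Fin.succ_injective n h)))
      (fun i => hr2 i.succ)
      (fun i => (step (g i.succ) c)^[M] (u i.succ)) hd' hsum'
    -- invert the step transform on the surviving indices
    have hzero_succ : ∀ (i : Fin n) a, u i.succ a = 0 := by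
      intro i
      have hregi : g i.succ - c ∈ nonZeroDivisors R := hr1 i.succ 0 (Fin.succ_ne_zero i)
      have inv : ∀ j, (∀ a, ((step (g i.succ) c)^[j] (u i.succ)) a = 0) →
          ∀ a, u i.succ a = 0 := by
        intro j
        induction j with
        | zero => intro h a; simpa using h a
        | succ j ihj =>
          intro h
          refine ihj (fun a => ?_)
          refine step_inj (g i.succ) c hregi _ M
            (dpow_iterate_step (g i.succ) c (u i.succ) (hd i.succ) j)
            (fun a' => ?_) a
          have := h a'
          rwa [Function.iterate_succ_apply'] at this
      exact inv M (key i)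
    -- finally index 0
    intro i
    refine Fin.cases ?_ (fun i a => hzero_succ i a) i
    intro a
    have h := hsum a
    rw [Fin.sum_univ_succ] at h
    have hz : ∑ i : Fin n, g i.succ ^ a * u i.succ a = 0 :=
      Finset.sum_eq_zero (fun i _ => by rw [hzero_succ i a, mul_zero])
    rw [hz, add_zero] at h
    exact (pow_mem (hr2 0) a).2 _ (by rw [mul_comm]; exact h)

end Seq

end Stmt9Aux

open Stmt9Aux

section ConvLemmas

/-- Left unit law for convolution. -/
lemma conv_convOne_left (f : B →ₗ[k] B) : conv k B (convOne k B) f = f := by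
  ext x
  have hcomp : TensorProduct.map (convOne k B) f =
      (TensorProduct.map (Algebra.linearMap k B) f).comp
        (LinearMap.rTensor B (Coalgebra.counit (R := k) (A := B))) := by
    refine TensorProduct.ext' (fun p q => ?_)
    simp [convOne]
  simp only [conv, LinearMap.coe_comp, Function.comp_apply, hcomp]
  rw [Coalgebra.rTensor_counit_comul]
  simp [LinearMap.mul'_apply]

/-- Right unit law for convolution. -/
lemma conv_convOne_right (f : B →ₗ[k] B) : conv k B f (convOne k B) = f := by
  ext x
  have hcomp : TensorProduct.map f (convOne k B) =
      (TensorProduct.map f (Algebra.linearMap k B)).comp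
        (LinearMap.lTensor B (Coalgebra.counit (R := k) (A := B))) := by
    refine TensorProduct.ext' (fun p q => ?_)
    simp [convOne]
  simp only [conv, LinearMap.coe_comp, Function.comp_apply, hcomp]
  rw [Coalgebra.lTensor_counit_comul]
  simp [LinearMap.mul'_apply]

lemma conv_add_left (f f' g : B →ₗ[k] B) :
    conv k B (f + f') g = conv k B f g + conv k B f' g := by
  ext x
  simp [conv, TensorProduct.map_add_left]

lemma conv_add_right (f g g' : B →ₗ[k] B) :
    conv k B f (g + g') = conv k B f g + conv k B f g' := by
  ext x
  simp [conv, TensorProduct.map_add_right]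

lemma conv_sub_left (f f' g : B →ₗ[k] B) :
    conv k B (f - f') g = conv k B f g - conv k B f' g := by
  have h := conv_add_left k B (f - f') f' g
  rw [sub_add_cancel] at h
  rw [h, add_sub_cancel_right]

lemma conv_sub_right (f g g' : B →ₗ[k] B) :
    conv k B f (g - g') = conv k B f g - conv k B f g' := by
  have h := conv_add_right k B f (g - g') g'
  rw [sub_add_cancel] at h
  rw [h, add_sub_cancel_right]

end ConvLemmas

namespace Stmt9Aux

/-- The recursive "difference in the convolution algebra": `W n f = (1 - Ψ)^n f`
where `Ψ f = f ⊛ id`. -/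
noncomputable def W : ℕ → (B →ₗ[k] B) → (B →ₗ[k] B)
  | 0, f => f
  | n + 1, f => W n f - W n (conv k B f LinearMap.id)

lemma W_psi (n : ℕ) : ∀ f : B →ₗ[k] B,
    W k B n (conv k B f LinearMap.id) = conv k B (W k B n f) LinearMap.id := by
  induction n with
  | zero => intro f; rfl
  | succ n ih =>
    intro f
    show W k B n (conv k B f LinearMap.id)
        - W k B n (conv k B (conv k B f LinearMap.id) LinearMap.id)
      = conv k B (W k B n f - W k B n (conv k B f LinearMap.id)) LinearMap.id
    rw [conv_sub_left, ih (conv k B f LinearMap.id), ih f]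

lemma convPow_sub_eq_W (n : ℕ) :
    convPow k B n (convOne k B - LinearMap.id) = W k B n (convOne k B) := by
  induction n with
  | zero => rfl
  | succ n ih =>
    show conv k B (convPow k B n (convOne k B - LinearMap.id)) (convOne k B - LinearMap.id) = _
    rw [conv_sub_right, conv_convOne_right, ih]
    show W k B n (convOne k B) - conv k B (W k B n (convOne k B)) LinearMap.id = _
    rw [← W_psi]
    rfl

lemma convPow_id_succ (a : ℕ) :
    convPow k B (a + 1) LinearMap.id = conv k B (convPow k B a LinearMap.id) LinearMap.id := rfl

/-- `dpow` of the sequence `a ↦ (f ⊛ id^{⊛ a}) x` is given by `W`. -/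
lemma dpow_convPow (n : ℕ) : ∀ (f : B →ₗ[k] B) (a : ℕ) (x : B),
    dpow n (fun t => (((fun h => conv k B h LinearMap.id)^[t]) f) x) a
      = W k B n ((fun h => conv k B h LinearMap.id)^[a] f) x := by
  induction n with
  | zero => intro f a x; rfl
  | succ n ih =>
    intro f a x
    rw [dpow_succ_apply, ih, ih]
    show _ = (W k B n ((fun h => conv k B h LinearMap.id)^[a] f)
      - W k B n (conv k B ((fun h => conv k B h LinearMap.id)^[a] f) LinearMap.id)) x
    simp only [Function.iterate_succ_apply', LinearMap.sub_apply]

lemma convPow_id_eq_iterate (a : ℕ) :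
    convPow k B a LinearMap.id = (fun h => conv k B h LinearMap.id)^[a] (convOne k B) := by
  induction a with
  | zero => rfl
  | succ a ih =>
    rw [convPow_id_succ, ih]
    simp only [Function.iterate_succ_apply']

/-- Multiplicativity against a grouplike element. -/
lemma convPow_id_mul_grouplike {g : B} (hg : IsGrouplike k B g) :
    ∀ (a : ℕ) (x : B),
      convPow k B a LinearMap.id (x * g) = g ^ a * convPow k B a LinearMap.id x := by
  intro a
  induction a with
  | zero =>
    intro x
    show convOne k B (x * g) = g ^ 0 * convOne k B x
    simp [convOne, Bialgebra.counit_mul, hg.2]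
  | succ a ih =>
    intro x
    have key : ∀ y : B ⊗[k] B,
        LinearMap.mul' k B (TensorProduct.map (convPow k B a LinearMap.id) LinearMap.id
            (y * g ⊗ₜ[k] g))
          = g ^ (a + 1) * LinearMap.mul' k B
              (TensorProduct.map (convPow k B a LinearMap.id) LinearMap.id y) := by
      intro y
      induction y using TensorProduct.induction_on with
      | zero => simp
      | tmul p q =>
        rw [Algebra.TensorProduct.tmul_mul_tmul]
        simp only [TensorProduct.map_tmul, LinearMap.mul'_apply, LinearMap.id_coe, id_eq, ih]
        ring
      | add y z hy hz =>
        simp only [add_mul, map_add, mul_add, hy, hz]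
    have hcm : Coalgebra.comul (R := k) (x * g) = Coalgebra.comul (R := k) x * g ⊗ₜ[k] g := by
      rw [Bialgebra.comul_mul, hg.1]
    show LinearMap.mul' k B (TensorProduct.map (convPow k B a LinearMap.id) LinearMap.id
        (Coalgebra.comul (x * g))) = _
    rw [hcm, key]
    rfl

end Stmt9Aux

/-- **Theorem.** Let `B` be a commutative `k`-bialgebra, and let `g 1, …, g n` be grouplike
elements of `B` such that all differences `g i - g j` (for `i ≠ j`) and all the `g i` are
regular (non-zero-divisors).  Then the `g i` are linearly independent over the set `L` of
id-unipotent elements of `B`: if `b i ∈ L` and `∑ i, b i * g i = 0`, then all `b i = 0`. -/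
theorem stmt9 (n : ℕ) (g : Fin n → B) (hg : ∀ i, IsGrouplike k B (g i))
    (hreg1 : ∀ i j : Fin n, i ≠ j → (g i - g j) ∈ nonZeroDivisors B)
    (hreg2 : ∀ i : Fin n, g i ∈ nonZeroDivisors B)
    (b : Fin n → B) (hb : ∀ i, IdUnipotent k B (b i))
    (hsum : ∑ i, b i * g i = 0) :
    ∀ i, b i = 0 := by
  classical
  -- choose a uniform unipotence bound
  set M : ℕ := Finset.univ.sup (fun i : Fin n => ((hb i).choose.toNat + 1)) with hM
  have hDn : ∀ (i : Fin n) (m : ℕ), M ≤ m →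
      convPow k B m (convOne k B - LinearMap.id) (b i) = 0 := by
    intro i m hm
    refine (hb i).choose_spec m ?_
    have h1 : (hb i).choose.toNat + 1 ≤ M :=
      Finset.le_sup (f := fun i : Fin n => ((hb i).choose.toNat + 1)) (Finset.mem_univ i)
    have h2 : (hb i).choose ≤ ((hb i).choose.toNat : ℤ) := Int.self_le_toNat _
    have : ((hb i).choose.toNat : ℤ) < (m : ℤ) := by
      exact_mod_cast Nat.lt_of_lt_of_le (Nat.lt_succ_self _) (le_trans h1 hm)
    omega
  -- the sequences of convolution powers of id applied to the b i
  set u : Fin n → ℕ → B := fun i a => convPow k B a LinearMap.id (b i) with hu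
  -- vanishing of high differences at 0
  have hd0 : ∀ (i : Fin n) (m : ℕ), M ≤ m → Stmt9Aux.dpow m (u i) 0 = 0 := by
    intro i m hm
    have h1 : Stmt9Aux.dpow m (u i) 0
        = Stmt9Aux.W k B m ((fun h => conv k B h LinearMap.id)^[0] (convOne k B)) (b i) := by
      have hui : u i = fun t => (((fun h => conv k B h LinearMap.id)^[t]) (convOne k B)) (b i) := by
        funext t
        show convPow k B t LinearMap.id (b i) = _
        rw [Stmt9Aux.convPow_id_eq_iterate]
      rw [hui, Stmt9Aux.dpow_convPow]
    rw [h1]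
    have h2 : convPow k B m (convOne k B - LinearMap.id) (b i)
        = Stmt9Aux.W k B m (convOne k B) (b i) := by
      rw [Stmt9Aux.convPow_sub_eq_W]
    have h3 := hDn i m hm
    rw [h2] at h3
    exact h3
  have hd : ∀ (i : Fin n) (a : ℕ), Stmt9Aux.dpow M (u i) a = 0 := by
    intro i a
    exact Stmt9Aux.dpow_of_vanishing a (u i) (hd0 i)
  -- the exponential-sum identity
  have hsum' : ∀ a, ∑ i, g i ^ a * u i a = 0 := by
    intro a
    have h1 : convPow k B a LinearMap.id (∑ i, b i * g i) = 0 := by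
      rw [hsum, map_zero]
    rw [map_sum] at h1
    calc ∑ i, g i ^ a * u i a
        = ∑ i, convPow k B a LinearMap.id (b i * g i) := by
          refine Finset.sum_congr rfl (fun i _ => ?_)
          rw [Stmt9Aux.convPow_id_mul_grouplike k B (hg i) a (b i)]
      _ = 0 := h1
  -- apply the core lemma
  have hcore := Stmt9Aux.core M n g hreg1 hreg2 u hd hsum'
  intro i
  have h1 : u i 1 = b i := by
    show conv k B (convOne k B) LinearMap.id (b i) = b i
    rw [conv_convOne_left]
    rfl
  rw [← h1, hcore i 1]
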